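/- arXiv:0806.0437 — 2 statements merged into one kernel-verified Lean document; each statement's English description precedes it below -/
import Mathlib

section
/- Let $\mu$ be a Radon measure on a locally compact Hausdorff space $X$ (e.g. a manifold) such that for all continuous compactly supported functions $\varphi, \psi \ge 0$ with $\varphi\cdot\psi = 0$ one has $(\int \varphi\,d\mu)(\int \psi\,d\mu) = 0$. Then $\mu$ is a point measure: there exist $c \in [0,\infty)$ and $p \in X$ such that $\int \varphi\,d\mu = c\,\varphi(p)$ for every continuous compactly supported $\varphi$. -/
/-!
Two distinct points of the support of `μ` would carry bump functions with disjoint supports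
and positive integrals, so the support of `μ` is at most a point `p`. An inner regular
measure is concentrated on its support, hence `μ = μ {p} • δ_p`.
-/

open MeasureTheory Set

namespace MeasureTheory.Measure

variable {X : Type*} [TopologicalSpace X] [MeasurableSpace X] {μ : Measure X}

lemma integral_pos_of_mem_support {f : X → ℝ} {p : X} (hp : p ∈ μ.support)
    (hf : Continuous f) (hf0 : 0 ≤ f) (hfi : Integrable f μ) (hfp : f p ≠ 0) :
    0 < ∫ x, f x ∂μ :=
  (integral_pos_iff_support_of_nonneg hf0 hfi).2 <|
    (mem_support_iff_forall p).1 hp _ (hf.isOpen_support.mem_nhds hfp)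

lemma integral_eq_measureReal_singleton_smul_of_support_subset [OpensMeasurableSpace X]
    [MeasurableSingletonClass X] [μ.InnerRegular] {E : Type*} [NormedAddCommGroup E]
    [NormedSpace ℝ E] [CompleteSpace E] {p : X} (hp : μ.support ⊆ {p}) (f : X → E) :
    ∫ x, f x ∂μ = μ.real {p} • f p := by
  have hμp : μ.restrict {p} = μ :=
    restrict_eq_self_of_ae_mem (Filter.mem_of_superset support_mem_ae_of_innerRegular hp)
  rw [← integral_singleton, hμp]

end MeasureTheory.Measure

open MeasureTheory Measure

lemma exists_bump_support_subset {X : Type*} [TopologicalSpace X] [RegularSpace X]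
    [LocallyCompactSpace X] {U : Set X} (hU : IsOpen U) {p : X} (hp : p ∈ U) :
    ∃ f : X → ℝ, Continuous f ∧ HasCompactSupport f ∧ 0 ≤ f ∧ f p ≠ 0 ∧
      Function.support f ⊆ U := by
  obtain ⟨f, hfp, hfU, hfc, hf01⟩ := exists_continuous_one_zero_of_isCompact isCompact_singleton
    hU.isClosed_compl (disjoint_compl_right_iff_subset.2 (singleton_subset_iff.2 hp))
  refine ⟨f, f.continuous, hfc, fun x => (hf01 x).1, by simp [hfp rfl], fun x hx => ?_⟩
  by_contra hxU
  exact hx (hfU hxU)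

lemma support_subsingleton_of_integral_mul_integral_eq_zero {X : Type*} [TopologicalSpace X]
    [T2Space X] [LocallyCompactSpace X] [MeasurableSpace X] [OpensMeasurableSpace X]
    {μ : Measure X} [IsFiniteMeasureOnCompacts μ]
    (h : ∀ φ ψ : X → ℝ, Continuous φ → HasCompactSupport φ →
      Continuous ψ → HasCompactSupport ψ →
      (∀ x, 0 ≤ φ x) → (∀ x, 0 ≤ ψ x) → (∀ x, φ x * ψ x = 0) →
      (∫ x, φ x ∂μ) * (∫ x, ψ x ∂μ) = 0) :
    μ.support.Subsingleton := by
  intro p hp q hq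
  by_contra hpq
  obtain ⟨U, V, hU, hV, hpU, hqV, hUV⟩ := t2_separation hpq
  obtain ⟨f, hf, hfc, hf0, hfp, hfU⟩ := exists_bump_support_subset hU hpU
  obtain ⟨g, hg, hgc, hg0, hgq, hgV⟩ := exists_bump_support_subset hV hqV
  have hfg : ∀ x, f x * g x = 0 := fun x => by
    by_contra hx
    obtain ⟨hfx, hgx⟩ := mul_ne_zero_iff.1 hx
    exact hUV.le_bot ⟨hfU hfx, hgV hgx⟩
  have hfpos := integral_pos_of_mem_support hp hf hf0 (hf.integrable_of_hasCompactSupport hfc) hfp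
  have hgpos := integral_pos_of_mem_support hq hg hg0 (hg.integrable_of_hasCompactSupport hgc) hgq
  exact (mul_pos hfpos hgpos).ne' (h f g hf hfc hg hgc hf0 hg0 hfg)

/-- If `μ` is a Radon measure on a locally compact Hausdorff space
`X` such that `(∫ φ dμ)(∫ ψ dμ) = 0` for all continuous compactly supported
`φ, ψ ≥ 0` with `φ ⬝ ψ = 0`, then `μ` acts on `C_c(X)` as a nonnegative
multiple of a Dirac measure: there are `c ∈ [0,∞)` and `p ∈ X` with
`∫ φ dμ = c φ(p)` for all continuous compactly supported `φ`. -/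
theorem radon_measure_disjoint_product_eq_point_measure
    {X : Type*} [TopologicalSpace X] [T2Space X] [LocallyCompactSpace X]
    [Nonempty X] [MeasurableSpace X] [BorelSpace X]
    (μ : Measure X) [IsFiniteMeasureOnCompacts μ] [μ.InnerRegular]
    (h : ∀ φ ψ : X → ℝ, Continuous φ → HasCompactSupport φ →
      Continuous ψ → HasCompactSupport ψ →
      (∀ x, 0 ≤ φ x) → (∀ x, 0 ≤ ψ x) → (∀ x, φ x * ψ x = 0) →
      (∫ x, φ x ∂μ) * (∫ x, ψ x ∂μ) = 0) :
    ∃ (c : ℝ) (p : X), 0 ≤ c ∧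
      ∀ φ : X → ℝ, Continuous φ → HasCompactSupport φ →
        ∫ x, φ x ∂μ = c * φ p := by
  obtain ⟨p, hp⟩ : ∃ p, μ.support ⊆ {p} := by
    rcases (support_subsingleton_of_integral_mul_integral_eq_zero h).eq_empty_or_singleton with
      hempty | ⟨p, hp⟩
    · exact ⟨Classical.arbitrary X, hempty ▸ empty_subset _⟩
    · exact ⟨p, hp.subset⟩
  exact ⟨μ.real {p}, p, measureReal_nonneg, fun φ _ _ =>
    integral_eq_measureReal_singleton_smul_of_support_subset hp φ⟩
end

section
/- Let $M$ be a connected Riemannian manifold and $N \subset M$ an open subset such that the $(d-1)$-dimensional Hausdorff measure of $M \setminus N$ is zero, where $d = \dim M$. Then $N$ is connected. -/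
/-!
A bi-Lipschitz chart carries `M \ N` to a set `T ⊆ ℝ^d` with `μH[d-1] T = 0`. Such a `T` misses
some line in every direction through every open set: its orthogonal projection to the hyperplane
is `(d-1)`-null, while the projection of an open set is open. So two points of a ball minus `T`
are joined by a small ball around each of them and a segment parallel to the one joining them that
misses `T`; hence `N` is dense and every point has a neighbourhood `O` with `O ∩ N` preconnected.
Connectedness of `M` then glues these local pieces together.
-/

open MeasureTheory Metric Set Module Topology Filter Function
open scoped NNReal

theorem Dense.isPreconnected_of_forall_exists_mem_nhds {X : Type*} [TopologicalSpace X]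
    [PreconnectedSpace X] {N : Set X} (hN : Dense N)
    (hloc : ∀ p, ∃ O ∈ 𝓝 p, IsPreconnected (O ∩ N)) : IsPreconnected N := by
  rintro u v hu hv hNuv ⟨a, haN, hau⟩ ⟨b, hbN, hbv⟩
  by_contra huv
  -- `W u` and `W v` are open and cover `X`; density of `N` makes them disjoint
  let W (s : Set X) : Set X := {p | ∀ᶠ x in 𝓝 p, x ∈ N → x ∈ s}
  have hcover : univ ⊆ W u ∪ W v := by
    intro p _
    obtain ⟨O, hO, hpre⟩ := hloc p
    by_cases hOu : (O ∩ N ∩ u).Nonempty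
    · refine .inl (mem_of_superset hO fun x hxO hxN => ?_)
      by_contra hxu
      obtain ⟨y, hyON, hyuv⟩ := hpre u v hu hv (fun y hy => hNuv hy.2) hOu
        ⟨x, ⟨hxO, hxN⟩, (hNuv hxN).resolve_left hxu⟩
      exact huv ⟨y, hyON.2, hyuv⟩
    · exact .inr (mem_of_superset hO fun x hxO hxN =>
        (hNuv hxN).resolve_left fun hxu => hOu ⟨x, ⟨hxO, hxN⟩, hxu⟩)
  obtain ⟨p, -, hpu, hpv⟩ := isPreconnected_univ (W u) (W v) isOpen_setOfPred_eventually_nhds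
    isOpen_setOfPred_eventually_nhds hcover
    ⟨a, trivial, mem_of_superset (hu.mem_nhds hau) fun _ hx _ => hx⟩
    ⟨b, trivial, mem_of_superset (hv.mem_nhds hbv) fun _ hx _ => hx⟩
  obtain ⟨x, hxN, hxuv⟩ :=
    ((mem_closure_iff_frequently.1 (hN p)).and_eventually (hpu.and hpv)).exists
  exact huv ⟨x, hxN, hxuv.1 hxN, hxuv.2 hxN⟩

theorem MeasureTheory.Measure.eq_empty_of_hausdorffMeasure_eq_zero_of_neg {X : Type*}
    [EMetricSpace X] [MeasurableSpace X] [BorelSpace X] {d : ℝ} (hd : d < 0) {s : Set X}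
    (hs : μH[d] s = 0) : s = ∅ := by
  refine eq_empty_iff_forall_notMem.2 fun x hx => ?_
  rcases Measure.hausdorffMeasure_zero_or_top hd s with h0 | htop
  · simpa [h0] using Measure.one_le_hausdorffMeasure_zero_of_nonempty ⟨x, hx⟩
  · simp [hs] at htop

theorem LipschitzOnWith.hausdorffMeasure_image_null {X Y : Type*} [EMetricSpace X]
    [EMetricSpace Y] [MeasurableSpace X] [BorelSpace X] [MeasurableSpace Y] [BorelSpace Y]
    {K : ℝ≥0} {f : X → Y} {s : Set X} (hf : LipschitzOnWith K f s) {d : ℝ}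
    (hs : μH[d] s = 0) : μH[d] (f '' s) = 0 := by
  rcases lt_or_ge d 0 with hd | hd
  · simp [Measure.eq_empty_of_hausdorffMeasure_eq_zero_of_neg hd hs]
  · exact nonpos_iff_eq_zero.1
      ((hf.hausdorffMeasure_image_le hd).trans_eq (by rw [hs, mul_zero]))

theorem finrank_sub_one_le_finrank_orthogonal_span_singleton {E : Type*}
    [NormedAddCommGroup E] [InnerProductSpace ℝ E] [FiniteDimensional ℝ E] (v : E) :
    (finrank ℝ E : ℝ) - 1 ≤ finrank ℝ (ℝ ∙ v)ᗮ := by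
  have hsum := (ℝ ∙ v).finrank_add_finrank_orthogonal
  have hline : finrank ℝ (ℝ ∙ v) ≤ 1 := by simpa using finrank_span_le_card ({v} : Set E)
  have : finrank ℝ E ≤ finrank ℝ (ℝ ∙ v)ᗮ + 1 := by omega
  have := (Nat.cast_le (α := ℝ)).2 this
  push_cast at this
  linarith

section Euclidean

variable {E : Type*} [NormedAddCommGroup E] [InnerProductSpace ℝ E] [FiniteDimensional ℝ E]
  [MeasurableSpace E] [BorelSpace E] {T : Set E}

theorem exists_mem_forall_add_smul_notMem (hT : μH[finrank ℝ E - 1] T = 0) (v : E)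
    {O : Set E} (hO : IsOpen O) (hne : O.Nonempty) : ∃ z ∈ O, ∀ t : ℝ, z + t • v ∉ T := by
  let q : E →L[ℝ] (ℝ ∙ v)ᗮ := (ℝ ∙ v)ᗮ.orthogonalProjectionOnto
  have hqv (z : E) (t : ℝ) : q (z + t • v) = q z := by
    have : t • v ∈ (ℝ ∙ v)ᗮᗮ :=
      Submodule.le_orthogonal_orthogonal _
        (Submodule.smul_mem _ t (Submodule.mem_span_singleton_self v))
    rw [map_add, Submodule.orthogonalProjectionOnto_apply_of_mem_orthogonal this, add_zero]
  have hqT : μH[finrank ℝ (ℝ ∙ v)ᗮ] (q '' T) = 0 :=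
    q.lipschitz.lipschitzOnWith.hausdorffMeasure_image_null
      (nonpos_iff_eq_zero.1 <| (Measure.hausdorffMeasure_mono
        (finrank_sub_one_le_finrank_orthogonal_span_singleton v) T).trans_eq hT)
  have hqO : IsOpen (q '' O) := q.isOpenMap (fun w => ⟨w, by simp [q]⟩) O hO
  -- `μH[finrank]` is an additive Haar measure on `(ℝ ∙ v)ᗮ`, so open sets are not null
  obtain ⟨_, ⟨z, hzO, rfl⟩, hz⟩ : (q '' O \ q '' T).Nonempty :=
    sdiff_nonempty.2 fun h => (hqO.measure_ne_zero _ (hne.image q)) (measure_mono_null h hqT)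
  exact ⟨z, hzO, fun t hzt => hz ⟨_, hzt, hqv z t⟩⟩

theorem Convex.isPreconnected_diff_of_hausdorffMeasure_null {C : Set E} (hC : Convex ℝ C)
    (hT : μH[finrank ℝ E - 1] T = 0) (hCT : IsOpen (C \ T)) : IsPreconnected (C \ T) := by
  refine isPreconnected_of_forall_pair fun x hx y hy => ?_
  obtain ⟨δx, hδx, hbx⟩ := Metric.isOpen_iff.1 hCT x hx
  obtain ⟨δy, hδy, hby⟩ := Metric.isOpen_iff.1 hCT y hy
  -- a segment parallel to `[x, y]`, from near `x` to near `y`, that misses `T`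
  have hO : IsOpen (ball x δx ∩ (· + (y - x)) ⁻¹' ball y δy) :=
    isOpen_ball.inter (isOpen_ball.preimage (continuous_add_const _))
  obtain ⟨z, ⟨hzx, hzy⟩, hline⟩ := exists_mem_forall_add_smul_notMem hT (y - x) hO
    ⟨x, mem_ball_self hδx, show x + (y - x) ∈ _ by rw [add_sub_cancel]; exact mem_ball_self hδy⟩
  have hseg : segment ℝ z (z + (y - x)) ⊆ C \ T := fun w hw => by
    refine ⟨hC.segment_subset (hbx hzx).1 (hby hzy).1 hw, ?_⟩
    rw [segment_eq_image', add_sub_cancel_left] at hw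
    obtain ⟨θ, -, rfl⟩ := hw
    exact hline θ
  refine ⟨ball x δx ∪ (segment ℝ z (z + (y - x)) ∪ ball y δy),
    union_subset hbx (union_subset hseg hby), .inl (mem_ball_self hδx),
    .inr (.inr (mem_ball_self hδy)), ?_⟩
  exact (convex_ball x δx).isPreconnected.union z hzx (.inl (left_mem_segment ℝ _ _))
    ((convex_segment _ _).isPreconnected.union _ (right_mem_segment ℝ _ _) hzy
      (convex_ball y δy).isPreconnected)

end Euclidean

section BiLipschitz

variable {M E : Type*} [MetricSpace M] {U : Set M} {K : ℝ≥0}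

section
variable [PseudoMetricSpace E] {f : M → E}

theorem injOn_of_dist_le_mul_dist (hf : ∀ x ∈ U, ∀ y ∈ U, dist x y ≤ K * dist (f x) (f y)) :
    InjOn f U :=
  fun x hx y hy hxy => dist_le_zero.1 <| by simpa [hxy] using hf x hx y hy

theorem isOpen_image_of_dist_le_mul_dist (hf : ∀ x ∈ U, ∀ y ∈ U, dist x y ≤ K * dist (f x) (f y))
    (hfU : IsOpen (f '' U)) {s : Set M} (hs : IsOpen s) (hsU : s ⊆ U) : IsOpen (f '' s) := by
  refine Metric.isOpen_iff.2 ?_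
  rintro _ ⟨x, hxs, rfl⟩
  obtain ⟨r, hr, hrs⟩ := Metric.isOpen_iff.1 hs x hxs
  obtain ⟨ε, hε, hεU⟩ := Metric.isOpen_iff.1 hfU (f x) ⟨x, hsU hxs, rfl⟩
  refine ⟨min ε (r / (K + 1)), by positivity, fun y hy => ?_⟩
  obtain ⟨w, hwU, rfl⟩ := hεU (ball_subset_ball (min_le_left _ _) hy)
  refine ⟨w, hrs ?_, rfl⟩
  calc dist w x ≤ K * dist (f w) (f x) := hf w hwU x (hsU hxs)
    _ ≤ (K + 1) * dist (f w) (f x) := by gcongr; linarith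
    _ < (K + 1) * (r / (K + 1)) := by gcongr; exact (mem_ball.1 hy).trans_le (min_le_right _ _)
    _ = r := by field_simp

theorem IsPreconnected.of_image_of_dist_le_mul_dist
    (hf : ∀ x ∈ U, ∀ y ∈ U, dist x y ≤ K * dist (f x) (f y)) {S : Set M} (hSU : S ⊆ U)
    (hS : IsPreconnected (f '' S)) : IsPreconnected S := by
  rcases S.eq_empty_or_nonempty with rfl | ⟨x, -⟩
  · exact isPreconnected_empty
  have : Nonempty M := ⟨x⟩
  have hg : LipschitzOnWith K (invFunOn f U) (f '' U) :=
    LipschitzOnWith.of_dist_le_mul fun y hy y' hy' => by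
      simpa only [invFunOn_eq hy, invFunOn_eq hy'] using
        hf _ (invFunOn_mem hy) _ (invFunOn_mem hy')
  rw [← (injOn_of_dist_le_mul_dist hf).leftInvOn_invFunOn.image_image' hSU]
  exact hS.image _ (hg.continuousOn.mono (image_mono hSU))

end

variable [MeasurableSpace M] [BorelSpace M] [NormedAddCommGroup E] [InnerProductSpace ℝ E]
  [FiniteDimensional ℝ E] [MeasurableSpace E] [BorelSpace E] {f : M → E} {N : Set M}

theorem inter_nonempty_of_hausdorffMeasure_diff_null (hlip : LipschitzOnWith K f U)
    (hf : ∀ x ∈ U, ∀ y ∈ U, dist x y ≤ K * dist (f x) (f y)) (hfU : IsOpen (f '' U))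
    (hnull : μH[finrank ℝ E - 1] (U \ N) = 0) {V : Set M} (hV : IsOpen V) (hVU : V ⊆ U)
    (hne : V.Nonempty) : (V ∩ N).Nonempty := by
  have hT : μH[finrank ℝ E - 1] (f '' (V \ N)) = 0 :=
    (hlip.mono (sdiff_subset.trans hVU)).hausdorffMeasure_image_null
      (measure_mono_null (sdiff_subset_sdiff_left hVU) hnull)
  -- with `v = 0` this only says that the null set `f '' (V \ N)` has empty interior
  obtain ⟨_, ⟨x, hxV, rfl⟩, hx⟩ := exists_mem_forall_add_smul_notMem hT 0
    (isOpen_image_of_dist_le_mul_dist hf hfU hV hVU) (hne.image f)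
  refine ⟨x, hxV, ?_⟩
  by_contra hxN
  exact hx 0 (by simpa using mem_image_of_mem f (show x ∈ V \ N from ⟨hxV, hxN⟩))

theorem exists_mem_nhds_isPreconnected_inter_of_hausdorffMeasure_diff_null (hU : IsOpen U)
    (hlip : LipschitzOnWith K f U) (hf : ∀ x ∈ U, ∀ y ∈ U, dist x y ≤ K * dist (f x) (f y))
    (hfU : IsOpen (f '' U)) (hN : IsOpen N) (hnull : μH[finrank ℝ E - 1] (U \ N) = 0)
    {p : M} (hp : p ∈ U) : ∃ O ∈ 𝓝 p, IsPreconnected (O ∩ N) := by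
  obtain ⟨ρ, hρ, hball⟩ := Metric.isOpen_iff.1 hfU (f p) ⟨p, hp, rfl⟩
  set O := U ∩ f ⁻¹' ball (f p) ρ
  have hOU : O ⊆ U := inter_subset_left
  have hO : IsOpen O := hlip.continuousOn.isOpen_inter_preimage hU isOpen_ball
  have hT : μH[finrank ℝ E - 1] (f '' (O \ N)) = 0 :=
    (hlip.mono (sdiff_subset.trans hOU)).hausdorffMeasure_image_null
      (measure_mono_null (sdiff_subset_sdiff_left hOU) hnull)
  have hfON : f '' (O ∩ N) = ball (f p) ρ \ f '' (O \ N) := by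
    rw [← sdiff_sdiff_right_self, ((injOn_of_dist_le_mul_dist hf).mono hOU).image_sdiff_subset
      sdiff_subset, image_inter_preimage, inter_eq_right.2 hball]
  refine ⟨O, hO.mem_nhds ⟨hp, mem_ball_self hρ⟩,
    .of_image_of_dist_le_mul_dist hf (inter_subset_left.trans hOU) ?_⟩
  rw [hfON]
  refine (convex_ball _ _).isPreconnected_diff_of_hausdorffMeasure_null hT ?_
  rw [← hfON]
  exact isOpen_image_of_dist_le_mul_dist hf hfU (hO.inter hN) (inter_subset_left.trans hOU)

end BiLipschitz

/-- Let `M` be a connected `d`-dimensional Riemannian manifold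
(formalized as a connected metric measure space which is locally bi-Lipschitz
homeomorphic to open subsets of `ℝ^d`). If `N ⊆ M` is open and the
`(d-1)`-dimensional Hausdorff measure of `M \ N` vanishes, then `N` is
connected. -/
theorem open_complement_hausdorff_null_connected
    {M : Type*} [MetricSpace M] [MeasurableSpace M] [BorelSpace M]
    [ConnectedSpace M] (d : ℕ)
    (hcharts : ∀ p : M, ∃ (U : Set M) (f : M → EuclideanSpace ℝ (Fin d))
      (K : ℝ≥0), IsOpen U ∧ p ∈ U ∧ 0 < K ∧ LipschitzOnWith K f U ∧
        (∀ x ∈ U, ∀ y ∈ U, dist x y ≤ (K : ℝ) * dist (f x) (f y)) ∧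
        IsOpen (f '' U))
    (N : Set M) (hN : IsOpen N)
    (hnull : μH[(d : ℝ) - 1] (Set.univ \ N) = 0) :
    IsPreconnected N := by
  have hnullU (U : Set M) : μH[finrank ℝ (EuclideanSpace ℝ (Fin d)) - 1] (U \ N) = 0 := by
    rw [finrank_euclideanSpace_fin]
    exact measure_mono_null (sdiff_subset_sdiff_left (subset_univ U)) hnull
  refine Dense.isPreconnected_of_forall_exists_mem_nhds ?_ fun p => ?_
  · refine dense_iff_inter_open.2 fun V hV ⟨p, hpV⟩ => ?_
    obtain ⟨U, f, K, hU, hpU, -, hlip, hf, hfU⟩ := hcharts p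
    exact (inter_nonempty_of_hausdorffMeasure_diff_null hlip hf hfU (hnullU U) (hV.inter hU)
      inter_subset_right ⟨p, hpV, hpU⟩).mono (inter_subset_inter_left _ inter_subset_left)
  · obtain ⟨U, f, K, hU, hpU, -, hlip, hf, hfU⟩ := hcharts p
    exact exists_mem_nhds_isPreconnected_inter_of_hausdorffMeasure_diff_null hU hlip hf hfU hN
      (hnullU U) hpU
end
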